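/- arXiv:1902.03918 — 8 statements merged into one kernel-verified Lean document; each statement's English description precedes it below -/
import Mathlib

section
/- The charged Nariai spacetime is locally symmetric: the (0,5) covariant derivative of its Riemann curvature tensor with respect to the Levi-Civita connection of g vanishes identically, ∇R = 0 (and consequently ∇S = 0 as well). -/
noncomputable section

open Real

/-- Partial derivative of `f` in the `i`-th coordinate direction at the point `x`. -/
def pd (i : Fin 4) (f : (Fin 4 → ℝ) → ℝ) (x : Fin 4 → ℝ) : ℝ :=
  deriv (fun s => f (Function.update x i s)) (x i)

/-- The charged Nariai metric: coordinates `x 0 = t`, `x 1 = r`, `x 2 = θ`, `x 3 = φ`;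
nonzero components `g₁₁ = -(r₀²/L₀) sin² r`, `g₂₂ = r₀²/L₀`, `g₃₃ = r₀²`, `g₄₄ = r₀² sin² θ`. -/
def gCNS (r0 L0 : ℝ) (x : Fin 4 → ℝ) : Fin 4 → Fin 4 → ℝ := fun p q =>
  if p = 0 ∧ q = 0 then -(r0 ^ 2 / L0) * Real.sin (x 1) ^ 2
  else if p = 1 ∧ q = 1 then r0 ^ 2 / L0
  else if p = 2 ∧ q = 2 then r0 ^ 2
  else if p = 3 ∧ q = 3 then r0 ^ 2 * Real.sin (x 2) ^ 2
  else 0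

/-- Inverse of a diagonal metric. -/
def ginv (g : (Fin 4 → ℝ) → Fin 4 → Fin 4 → ℝ) (x : Fin 4 → ℝ) : Fin 4 → Fin 4 → ℝ :=
  fun p q => if p = q then (g x p p)⁻¹ else 0

/-- Christoffel symbols `Γ^a_{bc}` of the Levi-Civita connection of a diagonal metric. -/
def Chr (g : (Fin 4 → ℝ) → Fin 4 → Fin 4 → ℝ) (x : Fin 4 → ℝ) (a b c : Fin 4) : ℝ :=
  (1 / 2) * ∑ d : Fin 4, ginv g x a d *
    (pd b (fun y => g y d c) x + pd c (fun y => g y d b) x - pd d (fun y => g y b c) x)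

/-- Covariant derivative `∇_a T_{pq}` of a (0,2)-tensor field. -/
def covDeriv2 (g T : (Fin 4 → ℝ) → Fin 4 → Fin 4 → ℝ) (x : Fin 4 → ℝ) (a p q : Fin 4) : ℝ :=
  pd a (fun y => T y p q) x
    - ∑ e : Fin 4, Chr g x e a p * T x e q
    - ∑ e : Fin 4, Chr g x e a q * T x p e

/-- Covariant derivative `∇_a T_{pqrs}` of a (0,4)-tensor field. -/
def covDeriv4 (g : (Fin 4 → ℝ) → Fin 4 → Fin 4 → ℝ)
    (T : (Fin 4 → ℝ) → Fin 4 → Fin 4 → Fin 4 → Fin 4 → ℝ)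
    (x : Fin 4 → ℝ) (a p q r s : Fin 4) : ℝ :=
  pd a (fun y => T y p q r s) x
    - ∑ e : Fin 4, Chr g x e a p * T x e q r s
    - ∑ e : Fin 4, Chr g x e a q * T x p e r s
    - ∑ e : Fin 4, Chr g x e a r * T x p q e s
    - ∑ e : Fin 4, Chr g x e a s * T x p q r e

/-- Elementary (0,4)-tensor with the usual Riemann symmetries, supported on the
coordinate plane `(a,b)` and normalized so that its `(a,b,a,b)` component is `1`. -/
def blk (a b : Fin 4) (p q r s : Fin 4) : ℝ :=
  (if p = a ∧ q = b then (1 : ℝ) else if p = b ∧ q = a then -1 else 0) *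
  (if r = a ∧ s = b then (1 : ℝ) else if r = b ∧ s = a then -1 else 0)

/-- The (0,4) Riemann curvature tensor of the charged Nariai metric:
`R₁₂₁₂ = (r₀²/L₀) sin² r`, `R₃₄₃₄ = -r₀² sin² θ` (up to the Riemann symmetries). -/
def RCNS (r0 L0 : ℝ) (x : Fin 4 → ℝ) (p q r s : Fin 4) : ℝ :=
  (r0 ^ 2 / L0) * Real.sin (x 1) ^ 2 * blk 0 1 p q r s
    + (-(r0 ^ 2) * Real.sin (x 2) ^ 2) * blk 2 3 p q r s

/-- The Ricci tensor of the charged Nariai metric: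
`S₁₁ = sin² r`, `S₂₂ = S₃₃ = -1`, `S₄₄ = -sin² θ`. -/
def SCNS (x : Fin 4 → ℝ) : Fin 4 → Fin 4 → ℝ := fun p q =>
  if p = 0 ∧ q = 0 then Real.sin (x 1) ^ 2
  else if p = 1 ∧ q = 1 then -1
  else if p = 2 ∧ q = 2 then -1
  else if p = 3 ∧ q = 3 then -Real.sin (x 2) ^ 2
  else 0

/-- The scalar curvature of the charged Nariai metric: `κ = -2(1+L₀)/r₀²`. -/
def κCNS (r0 L0 : ℝ) : ℝ := -2 * (1 + L0) / r0 ^ 2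

/-- The coordinate domain of the charged Nariai chart: `0 < r < π`, `0 < θ < π`. -/
def CNSdom (x : Fin 4 → ℝ) : Prop :=
  0 < x 1 ∧ x 1 < Real.pi ∧ 0 < x 2 ∧ x 2 < Real.pi

/-- Kulkarni–Nomizu product of two symmetric (0,2)-tensors. -/
def KN (E A : Fin 4 → Fin 4 → ℝ) (p q r s : Fin 4) : ℝ :=
  E p s * A q r - E p r * A q s + E q r * A p s - E q s * A p r

/-- The (0,4) Weyl conformal curvature tensor of the charged Nariai metric. -/
def CCNS (r0 L0 : ℝ) (x : Fin 4 → ℝ) (p q r s : Fin 4) : ℝ :=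
  RCNS r0 L0 x p q r s
    + (1 / 2) * (gCNS r0 L0 x p s * SCNS x q r - gCNS r0 L0 x q s * SCNS x p r
        + SCNS x p s * gCNS r0 L0 x q r - SCNS x q s * gCNS r0 L0 x p r)
    - (κCNS r0 L0 / 6) * (gCNS r0 L0 x p s * gCNS r0 L0 x q r
        - gCNS r0 L0 x q s * gCNS r0 L0 x p r)

/-- The (0,4) projective curvature tensor of the charged Nariai metric (n = 4). -/
def PCNS (r0 L0 : ℝ) (x : Fin 4 → ℝ) (p q r s : Fin 4) : ℝ :=
  RCNS r0 L0 x p q r s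
    + (1 / 3) * (gCNS r0 L0 x p s * SCNS x q r - gCNS r0 L0 x q s * SCNS x p r)

/-- The (0,6)-tensor `(U·T)_{pqrs,uv}` built from two (0,4)-tensor fields. -/
def dot4 (g : (Fin 4 → ℝ) → Fin 4 → Fin 4 → ℝ)
    (U T : (Fin 4 → ℝ) → Fin 4 → Fin 4 → Fin 4 → Fin 4 → ℝ)
    (x : Fin 4 → ℝ) (p q r s u v : Fin 4) : ℝ :=
  - ∑ α : Fin 4, ∑ β : Fin 4, ginv g x α β *
      (U x u v p β * T x α q r s + U x u v q β * T x p α r s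
        + U x u v r β * T x p q α s + U x u v s β * T x p q r α)

/-- The Tachibana tensor `Q(Z,T)_{pqrs,uv}`. -/
def Qop (Z : Fin 4 → Fin 4 → ℝ) (T : Fin 4 → Fin 4 → Fin 4 → Fin 4 → ℝ)
    (p q r s u v : Fin 4) : ℝ :=
  Z v p * T u q r s + Z v q * T p u r s + Z v r * T p q u s + Z v s * T p q r u
    - Z u p * T v q r s - Z u q * T p v r s - Z u r * T p q v s - Z u s * T p q r v

/-- The Ricci operator `S^t_p = g^{tα} S_{αp}` of a metric `g` with Ricci tensor `S`. -/
def Sop (g S : (Fin 4 → ℝ) → Fin 4 → Fin 4 → ℝ) (x : Fin 4 → ℝ) (t p : Fin 4) : ℝ :=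
  ∑ a : Fin 4, ginv g x t a * S x a p


/-! ### Auxiliary lemmas for the proof -/

lemma pd_const' (i : Fin 4) (c : ℝ) (x : Fin 4 → ℝ) : pd i (fun _ => c) x = 0 := by
  simp [pd]

lemma pd_of_ne' (i j : Fin 4) (h : j ≠ i) (f : ℝ → ℝ) (x : Fin 4 → ℝ) :
    pd i (fun y => f (y j)) x = 0 := by
  simp [pd, Function.update_of_ne h]

lemma pd_sin_sq_self (i : Fin 4) (c : ℝ) (x : Fin 4 → ℝ) :
    pd i (fun y => c * Real.sin (y i) ^ 2) x = c * (2 * Real.sin (x i) * Real.cos (x i)) := by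
  unfold pd
  simp only [Function.update_self]
  have h : HasDerivAt (fun s : ℝ => c * Real.sin s ^ 2)
      (c * (2 * Real.sin (x i) * Real.cos (x i))) (x i) := by
    have := ((Real.hasDerivAt_sin (x i)).pow 2).const_mul c
    simpa [mul_comm, mul_assoc, mul_left_comm] using this
  exact h.deriv

lemma pd_sin_sq (i j : Fin 4) (c : ℝ) (x : Fin 4 → ℝ) :
    pd i (fun y => c * Real.sin (y j) ^ 2) x =
      if i = j then c * (2 * Real.sin (x j) * Real.cos (x j)) else 0 := by
  by_cases h : i = j
  · subst h; simp [pd_sin_sq_self]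
  · simp only [h, if_false]
    exact pd_of_ne' _ _ (fun e => h e.symm) (fun t => c * Real.sin t ^ 2) x

lemma pd_gCNS (r0 L0 : ℝ) (i p q : Fin 4) (x : Fin 4 → ℝ) :
    pd i (fun y => gCNS r0 L0 y p q) x =
      if p = 0 ∧ q = 0 ∧ i = 1 then -(r0 ^ 2 / L0) * (2 * Real.sin (x 1) * Real.cos (x 1))
      else if p = 3 ∧ q = 3 ∧ i = 2 then r0 ^ 2 * (2 * Real.sin (x 2) * Real.cos (x 2))
      else 0 := by
  fin_cases p <;> fin_cases q <;>
    simp only [gCNS, Fin.isValue, Fin.reduceEq, and_self, and_true, true_and, false_and,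
      and_false, if_true, if_false, ite_true, ite_false] <;>
    first
      | simpa using pd_sin_sq i 1 (-(r0 ^ 2 / L0)) x
      | simpa using pd_sin_sq i 2 (r0 ^ 2) x
      | exact pd_const' _ _ _

/-- Explicit Christoffel table for the charged Nariai metric. -/
def Gam (x : Fin 4 → ℝ) (a b c : Fin 4) : ℝ :=
  if a = 0 ∧ ((b = 0 ∧ c = 1) ∨ (b = 1 ∧ c = 0)) then Real.cos (x 1) / Real.sin (x 1)
  else if a = 1 ∧ b = 0 ∧ c = 0 then Real.sin (x 1) * Real.cos (x 1)
  else if a = 3 ∧ ((b = 2 ∧ c = 3) ∨ (b = 3 ∧ c = 2)) then Real.cos (x 2) / Real.sin (x 2)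
  else if a = 2 ∧ b = 3 ∧ c = 3 then -(Real.sin (x 2) * Real.cos (x 2))
  else 0

lemma chr_diag (g : (Fin 4 → ℝ) → Fin 4 → Fin 4 → ℝ) (x : Fin 4 → ℝ) (a b c : Fin 4) :
    Chr g x a b c = (1 / 2) * ((g x a a)⁻¹ *
      (pd b (fun y => g y a c) x + pd c (fun y => g y a b) x - pd a (fun y => g y b c) x)) := by
  unfold Chr
  congr 1
  rw [Finset.sum_eq_single a]
  · simp [ginv]
  · intro d _ hd; simp [ginv, (Ne.symm hd : ¬ a = d)]
  · intro h; exact absurd (Finset.mem_univ a) h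

lemma chr_eval (r0 L0 : ℝ) (hr0 : 0 < r0) (hL0 : 0 < L0) (x : Fin 4 → ℝ)
    (h1 : Real.sin (x 1) ≠ 0) (h2 : Real.sin (x 2) ≠ 0) (a b c : Fin 4) :
    Chr (gCNS r0 L0) x a b c = Gam x a b c := by
  have hr : r0 ≠ 0 := ne_of_gt hr0
  have hL : L0 ≠ 0 := ne_of_gt hL0
  rw [chr_diag]
  simp only [pd_gCNS]
  fin_cases a <;> fin_cases b <;> fin_cases c <;>
    simp [gCNS, Gam] <;> field_simp <;> ring

/-- The elementary antisymmetric symbol. -/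
def eps (a b p q : Fin 4) : ℝ :=
  if p = a ∧ q = b then (1 : ℝ) else if p = b ∧ q = a then -1 else 0

lemma RCNS_eq (r0 L0 : ℝ) (x : Fin 4 → ℝ) (p q r s : Fin 4) :
    RCNS r0 L0 x p q r s =
      (r0 ^ 2 / L0) * Real.sin (x 1) ^ 2 * (eps 0 1 p q * eps 0 1 r s)
      + (-(r0 ^ 2) * Real.sin (x 2) ^ 2) * (eps 2 3 p q * eps 2 3 r s) := rfl

lemma pd_two_sin (a : Fin 4) (c1 k1 c2 k2 : ℝ) (x : Fin 4 → ℝ) :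
    pd a (fun y => c1 * Real.sin (y 1) ^ 2 * k1 + c2 * Real.sin (y 2) ^ 2 * k2) x =
      (if a = 1 then c1 * (2 * Real.sin (x 1) * Real.cos (x 1)) * k1 else 0)
      + (if a = 2 then c2 * (2 * Real.sin (x 2) * Real.cos (x 2)) * k2 else 0) := by
  unfold pd
  by_cases h1 : a = 1
  · subst h1
    simp only [Function.update_self, Function.update_of_ne (by decide : (2 : Fin 4) ≠ 1),
      Fin.reduceEq, if_true, if_false, ite_true, ite_false, add_zero]
    have hb : HasDerivAt (fun s : ℝ => c1 * Real.sin s ^ 2 * k1)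
        (c1 * (2 * Real.sin (x 1) * Real.cos (x 1)) * k1) (x 1) := by
      have := (((Real.hasDerivAt_sin (x 1)).pow 2).const_mul c1).mul_const k1
      simpa [mul_comm, mul_assoc, mul_left_comm] using this
    exact (hb.add_const (c2 * Real.sin (x 2) ^ 2 * k2)).deriv
  by_cases h2 : a = 2
  · subst h2
    simp only [Function.update_self, Function.update_of_ne (by decide : (1 : Fin 4) ≠ 2),
      Fin.reduceEq, if_true, if_false, ite_true, ite_false, zero_add]
    have hb : HasDerivAt (fun s : ℝ => c2 * Real.sin s ^ 2 * k2)
        (c2 * (2 * Real.sin (x 2) * Real.cos (x 2)) * k2) (x 2) := by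
      have := (((Real.hasDerivAt_sin (x 2)).pow 2).const_mul c2).mul_const k2
      simpa [mul_comm, mul_assoc, mul_left_comm] using this
    exact (hb.const_add (c1 * Real.sin (x 1) ^ 2 * k1)).deriv
  · simp only [h1, h2, if_false, add_zero,
      Function.update_of_ne (fun e => h1 e.symm : (1 : Fin 4) ≠ a),
      Function.update_of_ne (fun e => h2 e.symm : (2 : Fin 4) ≠ a)]
    simp

lemma pd_RCNS (r0 L0 : ℝ) (a p q r s : Fin 4) (x : Fin 4 → ℝ) :
    pd a (fun y => RCNS r0 L0 y p q r s) x =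
      (if a = 1 then (r0 ^ 2 / L0) * (2 * Real.sin (x 1) * Real.cos (x 1)) * blk 0 1 p q r s
        else 0)
      + (if a = 2 then -(r0 ^ 2) * (2 * Real.sin (x 2) * Real.cos (x 2)) * blk 2 3 p q r s
        else 0) :=
  pd_two_sin a (r0 ^ 2 / L0) (blk 0 1 p q r s) (-(r0 ^ 2)) (blk 2 3 p q r s) x

lemma blk_eq (a b p q r s : Fin 4) : blk a b p q r s = eps a b p q * eps a b r s := rfl

lemma eps23_0l (q : Fin 4) : eps 2 3 0 q = 0 := by simp [eps]
lemma eps23_0r (p : Fin 4) : eps 2 3 p 0 = 0 := by simp [eps]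
lemma eps23_1l (q : Fin 4) : eps 2 3 1 q = 0 := by simp [eps]
lemma eps23_1r (p : Fin 4) : eps 2 3 p 1 = 0 := by simp [eps]
lemma eps01_2l (q : Fin 4) : eps 0 1 2 q = 0 := by simp [eps]
lemma eps01_2r (p : Fin 4) : eps 0 1 p 2 = 0 := by simp [eps]
lemma eps01_3l (q : Fin 4) : eps 0 1 3 q = 0 := by simp [eps]
lemma eps01_3r (p : Fin 4) : eps 0 1 p 3 = 0 := by simp [eps]

lemma insA (t : ℝ) (p q : Fin 4) :
    (if p = 0 then t else 0) * eps 0 1 0 q + (if q = 0 then t else 0) * eps 0 1 p 0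
      = t * eps 0 1 p q := by
  fin_cases p <;> fin_cases q <;> simp [eps]

lemma insB (t : ℝ) (p q : Fin 4) :
    (if p = 3 then t else 0) * eps 2 3 3 q + (if q = 3 then t else 0) * eps 2 3 p 3
      = t * eps 2 3 p q := by
  fin_cases p <;> fin_cases q <;> simp [eps]

lemma insC (t u : ℝ) (p q : Fin 4) :
    (if p = 1 then t else 0) * eps 0 1 0 q + (if p = 0 then u else 0) * eps 0 1 1 q
      + (if q = 1 then t else 0) * eps 0 1 p 0 + (if q = 0 then u else 0) * eps 0 1 p 1
      = 0 := by
  fin_cases p <;> fin_cases q <;> simp [eps]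

lemma insD (t u : ℝ) (p q : Fin 4) :
    (if p = 2 then t else 0) * eps 2 3 3 q + (if p = 3 then u else 0) * eps 2 3 2 q
      + (if q = 2 then t else 0) * eps 2 3 p 3 + (if q = 3 then u else 0) * eps 2 3 p 2
      = 0 := by
  fin_cases p <;> fin_cases q <;> simp [eps]


lemma covR0 (r0 L0 : ℝ) (hr0 : 0 < r0) (hL0 : 0 < L0) (x : Fin 4 → ℝ)
    (h1 : Real.sin (x 1) ≠ 0) (h2 : Real.sin (x 2) ≠ 0) (p q r s : Fin 4) : covDeriv4 (gCNS r0 L0) (RCNS r0 L0) x 0 p q r s = 0 := by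
  unfold covDeriv4
  simp only [chr_eval r0 L0 hr0 hL0 x h1 h2, pd_RCNS, Fin.sum_univ_four]
  simp only [RCNS_eq, blk_eq]
  simp only [Gam, Fin.isValue, Fin.reduceEq, and_self, and_true, true_and, false_and,
    and_false, false_or, or_false, true_or, or_true, if_true, if_false, ite_true, ite_false,
    eps23_0l, eps23_0r, eps23_1l, eps23_1r,
    zero_mul, mul_zero, add_zero, zero_add, sub_zero, neg_zero]
  linear_combination
    (-(r0 ^ 2 / L0 * Real.sin (x 1) ^ 2 * eps 0 1 r s))
        * insC (Real.cos (x 1) / Real.sin (x 1)) (Real.sin (x 1) * Real.cos (x 1)) p q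
    + (-(r0 ^ 2 / L0 * Real.sin (x 1) ^ 2 * eps 0 1 p q))
        * insC (Real.cos (x 1) / Real.sin (x 1)) (Real.sin (x 1) * Real.cos (x 1)) r s

lemma covR1 (r0 L0 : ℝ) (hr0 : 0 < r0) (hL0 : 0 < L0) (x : Fin 4 → ℝ)
    (h1 : Real.sin (x 1) ≠ 0) (h2 : Real.sin (x 2) ≠ 0) (p q r s : Fin 4) : covDeriv4 (gCNS r0 L0) (RCNS r0 L0) x 1 p q r s = 0 := by
  have hcot : Real.cos (x 1) / Real.sin (x 1) * (r0 ^ 2 / L0 * Real.sin (x 1) ^ 2)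
      = r0 ^ 2 / L0 * (Real.sin (x 1) * Real.cos (x 1)) := by
    field_simp
  unfold covDeriv4
  simp only [chr_eval r0 L0 hr0 hL0 x h1 h2, pd_RCNS, Fin.sum_univ_four]
  simp only [RCNS_eq, blk_eq]
  simp only [Gam, Fin.isValue, Fin.reduceEq, and_self, and_true, true_and, false_and,
    and_false, false_or, or_false, true_or, or_true, if_true, if_false, ite_true, ite_false,
    eps23_0l, eps23_0r, eps23_1l, eps23_1r,
    zero_mul, mul_zero, add_zero, zero_add, sub_zero, neg_zero]
  linear_combination
    (-(r0 ^ 2 / L0 * Real.sin (x 1) ^ 2 * eps 0 1 r s))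
        * insA (Real.cos (x 1) / Real.sin (x 1)) p q
    + (-(r0 ^ 2 / L0 * Real.sin (x 1) ^ 2 * eps 0 1 p q))
        * insA (Real.cos (x 1) / Real.sin (x 1)) r s
    + (-(2 * eps 0 1 p q * eps 0 1 r s)) * hcot

lemma covR2 (r0 L0 : ℝ) (hr0 : 0 < r0) (hL0 : 0 < L0) (x : Fin 4 → ℝ)
    (h1 : Real.sin (x 1) ≠ 0) (h2 : Real.sin (x 2) ≠ 0) (p q r s : Fin 4) : covDeriv4 (gCNS r0 L0) (RCNS r0 L0) x 2 p q r s = 0 := by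
  have hcot : Real.cos (x 2) / Real.sin (x 2) * (-(r0 ^ 2) * Real.sin (x 2) ^ 2)
      = -(r0 ^ 2) * (Real.sin (x 2) * Real.cos (x 2)) := by
    field_simp
  unfold covDeriv4
  simp only [chr_eval r0 L0 hr0 hL0 x h1 h2, pd_RCNS, Fin.sum_univ_four]
  simp only [RCNS_eq, blk_eq]
  simp only [Gam, Fin.isValue, Fin.reduceEq, and_self, and_true, true_and, false_and,
    and_false, false_or, or_false, true_or, or_true, if_true, if_false, ite_true, ite_false,
    eps01_2l, eps01_2r, eps01_3l, eps01_3r,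
    zero_mul, mul_zero, add_zero, zero_add, sub_zero, neg_zero]
  linear_combination
    (-(-(r0 ^ 2) * Real.sin (x 2) ^ 2 * eps 2 3 r s))
        * insB (Real.cos (x 2) / Real.sin (x 2)) p q
    + (-(-(r0 ^ 2) * Real.sin (x 2) ^ 2 * eps 2 3 p q))
        * insB (Real.cos (x 2) / Real.sin (x 2)) r s
    + (-(2 * eps 2 3 p q * eps 2 3 r s)) * hcot

lemma covR3 (r0 L0 : ℝ) (hr0 : 0 < r0) (hL0 : 0 < L0) (x : Fin 4 → ℝ)
    (h1 : Real.sin (x 1) ≠ 0) (h2 : Real.sin (x 2) ≠ 0) (p q r s : Fin 4) : covDeriv4 (gCNS r0 L0) (RCNS r0 L0) x 3 p q r s = 0 := by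
  unfold covDeriv4
  simp only [chr_eval r0 L0 hr0 hL0 x h1 h2, pd_RCNS, Fin.sum_univ_four]
  simp only [RCNS_eq, blk_eq]
  simp only [Gam, Fin.isValue, Fin.reduceEq, and_self, and_true, true_and, false_and,
    and_false, false_or, or_false, true_or, or_true, if_true, if_false, ite_true, ite_false,
    eps01_2l, eps01_2r, eps01_3l, eps01_3r,
    zero_mul, mul_zero, add_zero, zero_add, sub_zero, neg_zero]
  linear_combination
    (-(-(r0 ^ 2) * Real.sin (x 2) ^ 2 * eps 2 3 r s))
        * insD (Real.cos (x 2) / Real.sin (x 2)) (-(Real.sin (x 2) * Real.cos (x 2))) p q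
    + (-(-(r0 ^ 2) * Real.sin (x 2) ^ 2 * eps 2 3 p q))
        * insD (Real.cos (x 2) / Real.sin (x 2)) (-(Real.sin (x 2) * Real.cos (x 2))) r s

lemma pd_SCNS (x : Fin 4 → ℝ) (i p q : Fin 4) : pd i (fun y => SCNS y p q) x =
    if p = 0 ∧ q = 0 ∧ i = 1 then 2 * Real.sin (x 1) * Real.cos (x 1)
    else if p = 3 ∧ q = 3 ∧ i = 2 then -(2 * Real.sin (x 2) * Real.cos (x 2))
    else 0 := by
  fin_cases p <;> fin_cases q <;>
    simp only [SCNS, Fin.isValue, Fin.reduceEq, and_self, and_true, true_and, false_and,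
      and_false, if_true, if_false, ite_true, ite_false] <;>
    first
      | simpa using pd_sin_sq i 1 1 x
      | simpa using pd_sin_sq i 2 (-1) x
      | exact pd_const' _ _ _

lemma covS (r0 L0 : ℝ) (hr0 : 0 < r0) (hL0 : 0 < L0) (x : Fin 4 → ℝ)
    (h1 : Real.sin (x 1) ≠ 0) (h2 : Real.sin (x 2) ≠ 0) (a p q : Fin 4) : covDeriv2 (gCNS r0 L0) SCNS x a p q = 0 := by
  unfold covDeriv2
  simp only [chr_eval r0 L0 hr0 hL0 x h1 h2, pd_SCNS, Fin.sum_univ_four]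
  fin_cases a <;> fin_cases p <;> fin_cases q <;>
    simp [Gam, SCNS] <;> field_simp <;> ring

/-- The charged Nariai spacetime is locally symmetric: `∇R = 0`
(and consequently `∇S = 0`). -/
theorem cns_locally_symmetric (r0 L0 : ℝ) (hr0 : 0 < r0) (hL0 : 0 < L0) (hL1 : L0 ≤ 1)
    (x : Fin 4 → ℝ) (hx : CNSdom x) :
    (∀ a p q r s : Fin 4, covDeriv4 (gCNS r0 L0) (RCNS r0 L0) x a p q r s = 0) ∧
    (∀ a p q : Fin 4, covDeriv2 (gCNS r0 L0) SCNS x a p q = 0) := by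
  obtain ⟨hxa, hxb, hxc, hxd⟩ := hx
  have h1 : Real.sin (x 1) ≠ 0 := ne_of_gt (Real.sin_pos_of_pos_of_lt_pi hxa hxb)
  have h2 : Real.sin (x 2) ≠ 0 := ne_of_gt (Real.sin_pos_of_pos_of_lt_pi hxc hxd)
  constructor
  · intro a p q r s
    fin_cases a
    · exact covR0 r0 L0 hr0 hL0 x h1 h2 p q r s
    · exact covR1 r0 L0 hr0 hL0 x h1 h2 p q r s
    · exact covR2 r0 L0 hr0 hL0 x h1 h2 p q r s
    · exact covR3 r0 L0 hr0 hL0 x h1 h2 p q r s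
  · intro a p q
    exact covS r0 L0 hr0 hL0 x h1 h2 a p q
end
end

section
/- The charged Nariai spacetime is an Ein(2) space: its Ricci tensor satisfies the quadratic identity S²_{pq} + ((1+L₀)/r₀²) S_{pq} + (L₀/r₀⁴) g_{pq} = 0 at every point, where S²_{pq} = g^{αβ}S_{pα}S_{βq}. -/
noncomputable section

open Real

/-- The charged Nariai spacetime is an Ein(2) space:
`S²_{pq} + ((1+L₀)/r₀²) S_{pq} + (L₀/r₀⁴) g_{pq} = 0`, where
`S²_{pq} = g^{αβ} S_{pα} S_{βq}`. -/
theorem cns_Ein2 (r0 L0 : ℝ) (hr0 : 0 < r0) (hL0 : 0 < L0) (hL1 : L0 ≤ 1)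
    (x : Fin 4 → ℝ) (hx : CNSdom x) (p q : Fin 4) :
    (∑ α : Fin 4, ∑ β : Fin 4, SCNS x p α * ginv (gCNS r0 L0) x α β * SCNS x β q)
      + ((1 + L0) / r0 ^ 2) * SCNS x p q + (L0 / r0 ^ 4) * gCNS r0 L0 x p q = 0 := by
  obtain ⟨h1, h2, h3, h4⟩ := hx
  have hs1 : Real.sin (x 1) ≠ 0 := ne_of_gt (Real.sin_pos_of_pos_of_lt_pi h1 h2)
  have hs2 : Real.sin (x 2) ≠ 0 := ne_of_gt (Real.sin_pos_of_pos_of_lt_pi h3 h4)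
  have hr : r0 ≠ 0 := ne_of_gt hr0
  have hL : L0 ≠ 0 := ne_of_gt hL0
  fin_cases p <;> fin_cases q <;>
    simp [SCNS, ginv, gCNS, Fin.sum_univ_four] <;> field_simp <;> ring
end
end

section
/- The charged Nariai spacetime is pseudosymmetric due to the Weyl conformal curvature tensor: it satisfies C·R = ((1+L₀)/(6r₀²)) Q(g,R) identically. -/
noncomputable section

open Real

lemma blk_swap1 (a b p q r s : Fin 4) (hab : a ≠ b) : blk a b q p r s = -blk a b p q r s := by
  unfold blk
  split_ifs <;> simp_all <;> ring

lemma blk_swap2 (a b p q r s : Fin 4) (hab : a ≠ b) : blk a b p q s r = -blk a b p q r s := by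
  unfold blk
  split_ifs <;> simp_all <;> ring

lemma R_swap1 (r0 L0 : ℝ) (x : Fin 4 → ℝ) (p q r s : Fin 4) :
    RCNS r0 L0 x q p r s = -RCNS r0 L0 x p q r s := by
  unfold RCNS
  rw [blk_swap1 0 1 p q r s (by decide), blk_swap1 2 3 p q r s (by decide)]
  ring

lemma R_swap2 (r0 L0 : ℝ) (x : Fin 4 → ℝ) (p q r s : Fin 4) :
    RCNS r0 L0 x p q s r = -RCNS r0 L0 x p q r s := by
  unfold RCNS
  rw [blk_swap2 0 1 p q r s (by decide), blk_swap2 2 3 p q r s (by decide)]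
  ring

lemma C_swap1 (r0 L0 : ℝ) (x : Fin 4 → ℝ) (p q r s : Fin 4) :
    CCNS r0 L0 x q p r s = -CCNS r0 L0 x p q r s := by
  simp only [CCNS]
  rw [R_swap1 r0 L0 x p q r s]
  ring

lemma dot4_swap1 (r0 L0 : ℝ) (x : Fin 4 → ℝ) (p q r s u v : Fin 4) :
    dot4 (gCNS r0 L0) (CCNS r0 L0) (RCNS r0 L0) x q p r s u v
      = - dot4 (gCNS r0 L0) (CCNS r0 L0) (RCNS r0 L0) x p q r s u v := by
  have key : ∀ α β : Fin 4,
      ginv (gCNS r0 L0) x α β *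
        (CCNS r0 L0 x u v q β * RCNS r0 L0 x α p r s
          + CCNS r0 L0 x u v p β * RCNS r0 L0 x q α r s
          + CCNS r0 L0 x u v r β * RCNS r0 L0 x q p α s
          + CCNS r0 L0 x u v s β * RCNS r0 L0 x q p r α)
      = -(ginv (gCNS r0 L0) x α β *
        (CCNS r0 L0 x u v p β * RCNS r0 L0 x α q r s
          + CCNS r0 L0 x u v q β * RCNS r0 L0 x p α r s
          + CCNS r0 L0 x u v r β * RCNS r0 L0 x p q α s
          + CCNS r0 L0 x u v s β * RCNS r0 L0 x p q r α)) := by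
    intro α β
    rw [R_swap1 r0 L0 x p α r s, R_swap1 r0 L0 x α q r s, R_swap1 r0 L0 x p q α s,
      R_swap1 r0 L0 x p q r α]
    ring
  simp only [dot4, key, Finset.sum_neg_distrib, neg_neg]

lemma dot4_swap2 (r0 L0 : ℝ) (x : Fin 4 → ℝ) (p q r s u v : Fin 4) :
    dot4 (gCNS r0 L0) (CCNS r0 L0) (RCNS r0 L0) x p q s r u v
      = - dot4 (gCNS r0 L0) (CCNS r0 L0) (RCNS r0 L0) x p q r s u v := by
  have key : ∀ α β : Fin 4,
      ginv (gCNS r0 L0) x α β *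
        (CCNS r0 L0 x u v p β * RCNS r0 L0 x α q s r
          + CCNS r0 L0 x u v q β * RCNS r0 L0 x p α s r
          + CCNS r0 L0 x u v s β * RCNS r0 L0 x p q α r
          + CCNS r0 L0 x u v r β * RCNS r0 L0 x p q s α)
      = -(ginv (gCNS r0 L0) x α β *
        (CCNS r0 L0 x u v p β * RCNS r0 L0 x α q r s
          + CCNS r0 L0 x u v q β * RCNS r0 L0 x p α r s
          + CCNS r0 L0 x u v r β * RCNS r0 L0 x p q α s
          + CCNS r0 L0 x u v s β * RCNS r0 L0 x p q r α)) := by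
    intro α β
    rw [R_swap2 r0 L0 x α q r s, R_swap2 r0 L0 x p α r s, R_swap2 r0 L0 x p q r α,
      R_swap2 r0 L0 x p q α s]
    ring
  simp only [dot4, key, Finset.sum_neg_distrib, neg_neg]

lemma dot4_swap3 (r0 L0 : ℝ) (x : Fin 4 → ℝ) (p q r s u v : Fin 4) :
    dot4 (gCNS r0 L0) (CCNS r0 L0) (RCNS r0 L0) x p q r s v u
      = - dot4 (gCNS r0 L0) (CCNS r0 L0) (RCNS r0 L0) x p q r s u v := by
  have key : ∀ α β : Fin 4,
      ginv (gCNS r0 L0) x α β *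
        (CCNS r0 L0 x v u p β * RCNS r0 L0 x α q r s
          + CCNS r0 L0 x v u q β * RCNS r0 L0 x p α r s
          + CCNS r0 L0 x v u r β * RCNS r0 L0 x p q α s
          + CCNS r0 L0 x v u s β * RCNS r0 L0 x p q r α)
      = -(ginv (gCNS r0 L0) x α β *
        (CCNS r0 L0 x u v p β * RCNS r0 L0 x α q r s
          + CCNS r0 L0 x u v q β * RCNS r0 L0 x p α r s
          + CCNS r0 L0 x u v r β * RCNS r0 L0 x p q α s
          + CCNS r0 L0 x u v s β * RCNS r0 L0 x p q r α)) := by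
    intro α β
    rw [C_swap1 r0 L0 x u v p β, C_swap1 r0 L0 x u v q β, C_swap1 r0 L0 x u v r β,
      C_swap1 r0 L0 x u v s β]
    ring
  simp only [dot4, key, Finset.sum_neg_distrib, neg_neg]

lemma Qop_swap1 (r0 L0 : ℝ) (x : Fin 4 → ℝ) (Z : Fin 4 → Fin 4 → ℝ) (p q r s u v : Fin 4) :
    Qop Z (RCNS r0 L0 x) q p r s u v = - Qop Z (RCNS r0 L0 x) p q r s u v := by
  simp only [Qop]
  rw [R_swap1 r0 L0 x u q r s, R_swap1 r0 L0 x p q u s, R_swap1 r0 L0 x p q r u,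
    R_swap1 r0 L0 x v q r s, R_swap1 r0 L0 x p q v s, R_swap1 r0 L0 x p q r v,
    R_swap1 r0 L0 x u p r s, R_swap1 r0 L0 x v p r s]
  ring

lemma Qop_swap2 (r0 L0 : ℝ) (x : Fin 4 → ℝ) (Z : Fin 4 → Fin 4 → ℝ) (p q r s u v : Fin 4) :
    Qop Z (RCNS r0 L0 x) p q s r u v = - Qop Z (RCNS r0 L0 x) p q r s u v := by
  simp only [Qop]
  rw [R_swap2 r0 L0 x u q r s, R_swap2 r0 L0 x p u r s, R_swap2 r0 L0 x p q r u,
    R_swap2 r0 L0 x p q u s, R_swap2 r0 L0 x v q r s, R_swap2 r0 L0 x p v r s,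
    R_swap2 r0 L0 x p q r v, R_swap2 r0 L0 x p q v s]
  ring

lemma Qop_swap3 (Z : Fin 4 → Fin 4 → ℝ) (T : Fin 4 → Fin 4 → Fin 4 → Fin 4 → ℝ)
    (p q r s u v : Fin 4) :
    Qop Z T p q r s v u = - Qop Z T p q r s u v := by
  simp only [Qop]; ring

set_option maxHeartbeats 4000000 in
lemma cns_core (r0 L0 : ℝ) (hr : r0 ≠ 0) (hL : L0 ≠ 0) (x : Fin 4 → ℝ)
    (h1 : Real.sin (x 1) ≠ 0) (h2 : Real.sin (x 2) ≠ 0) (p q r s u v : Fin 4)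
    (hpq : p < q) (hrs : r < s) (huv : u < v) :
    dot4 (gCNS r0 L0) (CCNS r0 L0) (RCNS r0 L0) x p q r s u v
      = ((1 + L0) / (6 * r0 ^ 2)) * Qop (gCNS r0 L0 x) (RCNS r0 L0 x) p q r s u v := by
  fin_cases p <;> fin_cases q <;> (try exact absurd hpq (by decide)) <;>
    fin_cases r <;> fin_cases s <;> (try exact absurd hrs (by decide)) <;>
    fin_cases u <;> fin_cases v <;> (try exact absurd huv (by decide)) <;>
    (simp [dot4, Qop, CCNS, RCNS, SCNS, gCNS, ginv, κCNS, blk, Fin.sum_univ_four] <;>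
      (try field_simp) <;> (try ring))

lemma cns_rs (r0 L0 : ℝ) (hr : r0 ≠ 0) (hL : L0 ≠ 0) (x : Fin 4 → ℝ)
    (h1 : Real.sin (x 1) ≠ 0) (h2 : Real.sin (x 2) ≠ 0) (p q r s u v : Fin 4)
    (hpq : p < q) (huv : u < v) :
    dot4 (gCNS r0 L0) (CCNS r0 L0) (RCNS r0 L0) x p q r s u v
      = ((1 + L0) / (6 * r0 ^ 2)) * Qop (gCNS r0 L0 x) (RCNS r0 L0 x) p q r s u v := by
  rcases lt_trichotomy r s with h | h | h
  · exact cns_core r0 L0 hr hL x h1 h2 p q r s u v hpq h huv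
  · subst h
    linear_combination (1 / 2) * dot4_swap2 r0 L0 x p q r r u v
      - ((1 + L0) / (6 * r0 ^ 2) / 2) * Qop_swap2 r0 L0 x (gCNS r0 L0 x) p q r r u v
  · have e := cns_core r0 L0 hr hL x h1 h2 p q s r u v hpq h huv
    linear_combination dot4_swap2 r0 L0 x p q s r u v - e
      - ((1 + L0) / (6 * r0 ^ 2)) * Qop_swap2 r0 L0 x (gCNS r0 L0 x) p q s r u v

lemma cns_pq (r0 L0 : ℝ) (hr : r0 ≠ 0) (hL : L0 ≠ 0) (x : Fin 4 → ℝ)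
    (h1 : Real.sin (x 1) ≠ 0) (h2 : Real.sin (x 2) ≠ 0) (p q r s u v : Fin 4)
    (huv : u < v) :
    dot4 (gCNS r0 L0) (CCNS r0 L0) (RCNS r0 L0) x p q r s u v
      = ((1 + L0) / (6 * r0 ^ 2)) * Qop (gCNS r0 L0 x) (RCNS r0 L0 x) p q r s u v := by
  rcases lt_trichotomy p q with h | h | h
  · exact cns_rs r0 L0 hr hL x h1 h2 p q r s u v h huv
  · subst h
    linear_combination (1 / 2) * dot4_swap1 r0 L0 x p p r s u v
      - ((1 + L0) / (6 * r0 ^ 2) / 2) * Qop_swap1 r0 L0 x (gCNS r0 L0 x) p p r s u v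
  · have e := cns_rs r0 L0 hr hL x h1 h2 q p r s u v h huv
    linear_combination dot4_swap1 r0 L0 x q p r s u v - e
      - ((1 + L0) / (6 * r0 ^ 2)) * Qop_swap1 r0 L0 x (gCNS r0 L0 x) q p r s u v

/-- The charged Nariai spacetime is pseudosymmetric due to the Weyl
conformal curvature tensor: `C·R = ((1+L₀)/(6r₀²)) Q(g,R)`. -/
theorem cns_weyl_pseudosymmetric (r0 L0 : ℝ) (hr0 : 0 < r0) (hL0 : 0 < L0) (hL1 : L0 ≤ 1)
    (x : Fin 4 → ℝ) (hx : CNSdom x) (p q r s u v : Fin 4) :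
    dot4 (gCNS r0 L0) (CCNS r0 L0) (RCNS r0 L0) x p q r s u v
      = ((1 + L0) / (6 * r0 ^ 2)) * Qop (gCNS r0 L0 x) (RCNS r0 L0 x) p q r s u v := by
  have h1 : Real.sin (x 1) ≠ 0 := ne_of_gt (Real.sin_pos_of_pos_of_lt_pi hx.1 hx.2.1)
  have h2 : Real.sin (x 2) ≠ 0 := ne_of_gt (Real.sin_pos_of_pos_of_lt_pi hx.2.2.1 hx.2.2.2)
  have hr : r0 ≠ 0 := ne_of_gt hr0
  have hL : L0 ≠ 0 := ne_of_gt hL0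
  rcases lt_trichotomy u v with h | h | h
  · exact cns_pq r0 L0 hr hL x h1 h2 p q r s u v h
  · subst h
    linear_combination (1 / 2) * dot4_swap3 r0 L0 x p q r s u u
      - ((1 + L0) / (6 * r0 ^ 2) / 2) * Qop_swap3 (gCNS r0 L0 x) (RCNS r0 L0 x) p q r s u u
  · have e := cns_pq r0 L0 hr hL x h1 h2 p q r s v u h
    linear_combination dot4_swap3 r0 L0 x p q r s v u - e
      - ((1 + L0) / (6 * r0 ^ 2)) * Qop_swap3 (gCNS r0 L0 x) (RCNS r0 L0 x) p q r s v u
end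
end

section
/- For 0 < L₀ < 1 the charged Nariai spacetime is a 2-quasi-Einstein manifold: at every point of its domain (where sin r ≠ 0) the symmetric matrix (S_{pq} − α g_{pq}) with α = −1/r₀² has rank exactly 2. -/
noncomputable section

open Real

/-- For `0 < L₀ < 1` the charged Nariai spacetime is 2-quasi-Einstein:
at every point of the domain the matrix `S - α g` with `α = -1/r₀²` has rank exactly 2. -/
theorem cns_two_quasi_Einstein (r0 L0 : ℝ) (hr0 : 0 < r0) (hL0 : 0 < L0) (hL1 : L0 < 1)
    (x : Fin 4 → ℝ) (hx : CNSdom x) :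
    (Matrix.of fun p q : Fin 4 =>
      SCNS x p q - (-(1 / r0 ^ 2)) * gCNS r0 L0 x p q).rank = 2 := by
  obtain ⟨h1, h2, h3, h4⟩ := hx
  have hs : Real.sin (x 1) ≠ 0 := ne_of_gt (Real.sin_pos_of_pos_of_lt_pi h1 h2)
  have hr : (r0 : ℝ) ^ 2 ≠ 0 := pow_ne_zero 2 hr0.ne'
  have hL : L0 ≠ 0 := hL0.ne'
  set a : ℝ := Real.sin (x 1) ^ 2 * (1 - 1 / L0) with ha
  set b : ℝ := 1 / L0 - 1 with hb
  have hone : (1 : ℝ) < 1 / L0 := one_lt_one_div hL0 hL1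
  have hbne : b ≠ 0 := by
    have : 0 < b := by rw [hb]; linarith
    exact this.ne'
  have hane : a ≠ 0 := by
    apply mul_ne_zero (pow_ne_zero 2 hs)
    intro h
    have : (1 : ℝ) - 1 / L0 = 0 := h
    linarith
  have hEq : (Matrix.of fun p q : Fin 4 =>
      SCNS x p q - (-(1 / r0 ^ 2)) * gCNS r0 L0 x p q)
      = Matrix.diagonal ![a, b, 0, 0] := by
    ext p q
    fin_cases p <;> fin_cases q <;>
      simp [SCNS, gCNS, Matrix.diagonal, ha, hb] <;>
      field_simp <;> ring
  rw [hEq, Matrix.rank_diagonal]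
  rw [Fintype.card_subtype]
  have : (Finset.univ.filter fun i => ![a, b, 0, 0] i ≠ 0) = {0, 1} := by
    ext i
    fin_cases i <;> simp [hane, hbne]
  rw [this]
  decide
end
end

section
/- The charged Nariai spacetime is a generalized quasi-Einstein manifold in the sense of Chaki: its Ricci tensor decomposes as S_{pq} = α g_{pq} + β Π_p Π_q + γ (Π_p Φ_q + Φ_p Π_q) with α = −1/r₀², β = −1, γ = 1, and the 1-forms Π = (−sin r, 1, 0, 0) and Φ = (((1−2L₀)/(2L₀)) sin r, 1/(2L₀), 0, 0). -/
noncomputable section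

open Real

/-- The charged Nariai spacetime is generalized quasi-Einstein in the
sense of Chaki: `S = α g + β Π⊗Π + γ (Π⊗Φ + Φ⊗Π)` with `α = -1/r₀²`, `β = -1`, `γ = 1`,
`Π = (-sin r, 1, 0, 0)` and `Φ = (((1-2L₀)/(2L₀)) sin r, 1/(2L₀), 0, 0)`. -/
theorem cns_generalized_quasi_Einstein (r0 L0 : ℝ) (hr0 : 0 < r0) (hL0 : 0 < L0)
    (hL1 : L0 ≤ 1) (x : Fin 4 → ℝ) (hx : CNSdom x) (p q : Fin 4) :
    SCNS x p q =
      (-(1 / r0 ^ 2)) * gCNS r0 L0 x p q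
        + (-1) * ((![-Real.sin (x 1), 1, 0, 0] : Fin 4 → ℝ) p
            * (![-Real.sin (x 1), 1, 0, 0] : Fin 4 → ℝ) q)
        + 1 * ((![-Real.sin (x 1), 1, 0, 0] : Fin 4 → ℝ) p
              * (![((1 - 2 * L0) / (2 * L0)) * Real.sin (x 1), 1 / (2 * L0), 0, 0] : Fin 4 → ℝ) q
            + (![((1 - 2 * L0) / (2 * L0)) * Real.sin (x 1), 1 / (2 * L0), 0, 0] : Fin 4 → ℝ) p
              * (![-Real.sin (x 1), 1, 0, 0] : Fin 4 → ℝ) q) := by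
  have h0 : L0 ≠ 0 := ne_of_gt hL0
  have h1 : r0 ≠ 0 := ne_of_gt hr0
  fin_cases p <;> fin_cases q <;>
    simp [SCNS, gCNS, Matrix.cons_val_zero, Matrix.cons_val_one] <;>
    field_simp <;> ring
end
end

section
/- The Ricci tensor of the charged Nariai spacetime is Riemann compatible: the cyclic sum over (p,q,r) of S^t_p R_{qrst} vanishes, i.e. S^t_p R_{qrst} + S^t_q R_{rpst} + S^t_r R_{pqst} = 0 for all indices s and p,q,r. -/
set_option maxHeartbeats 2000000

noncomputable section

open Real

/-- The Ricci tensor of the charged Nariai spacetime is Riemann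
compatible: `S^t_p R_{qrst} + S^t_q R_{rpst} + S^t_r R_{pqst} = 0`. -/
theorem cns_riemann_compatible (r0 L0 : ℝ) (hr0 : 0 < r0) (hL0 : 0 < L0) (hL1 : L0 ≤ 1)
    (x : Fin 4 → ℝ) (hx : CNSdom x) (p q r s : Fin 4) :
    ∑ t : Fin 4, (Sop (gCNS r0 L0) SCNS x t p * RCNS r0 L0 x q r s t
      + Sop (gCNS r0 L0) SCNS x t q * RCNS r0 L0 x r p s t
      + Sop (gCNS r0 L0) SCNS x t r * RCNS r0 L0 x p q s t) = 0 := by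
  have hr : r0 ≠ 0 := ne_of_gt hr0
  have hL : L0 ≠ 0 := ne_of_gt hL0
  have hs1 : Real.sin (x 1) ≠ 0 :=
    ne_of_gt (Real.sin_pos_of_pos_of_lt_pi hx.1 hx.2.1)
  have hs2 : Real.sin (x 2) ≠ 0 :=
    ne_of_gt (Real.sin_pos_of_pos_of_lt_pi hx.2.2.1 hx.2.2.2)
  have hS : ∀ t u : Fin 4, Sop (gCNS r0 L0) SCNS x t u =
      if t = u then (if (t : ℕ) < 2 then -L0 / r0 ^ 2 else -1 / r0 ^ 2) else 0 := by
    intro t u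
    fin_cases t <;> fin_cases u <;>
      simp [Sop, ginv, gCNS, SCNS, Fin.sum_univ_four] <;> field_simp <;> ring
  simp only [Fin.sum_univ_four, hS]
  fin_cases p <;> fin_cases q <;> fin_cases r <;> fin_cases s <;>
    simp [RCNS, blk] <;> ring
end
end

section
/- The Ricci tensor of the charged Nariai spacetime is both conformally compatible and projectively compatible: the cyclic sums over (p,q,r) of S^t_p C_{qrst} and of S^t_p P_{qrst} vanish identically, where C is the Weyl conformal curvature tensor and P is the projective curvature tensor. -/
noncomputable section

open Real

lemma sop_eq (r0 L0 : ℝ) (hr0 : r0 ≠ 0) (hL0 : L0 ≠ 0) (x : Fin 4 → ℝ)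
    (hs1 : Real.sin (x 1) ≠ 0) (hs2 : Real.sin (x 2) ≠ 0) (t p : Fin 4) :
    Sop (gCNS r0 L0) SCNS x t p =
      if t = p then (if t = 0 ∨ t = 1 then -L0 / r0 ^ 2 else -1 / r0 ^ 2) else 0 := by
  fin_cases t <;> fin_cases p <;>
    (simp (config := { decide := true }) only [Sop, ginv, gCNS, SCNS, Fin.sum_univ_four,
      reduceIte, Fin.isValue, mul_zero, zero_mul, add_zero, zero_add]
     <;> (field_simp; try ring))

set_option maxHeartbeats 4000000 in
/-- The Ricci tensor of the charged Nariai spacetime is both conformally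
compatible and projectively compatible. -/
theorem cns_conformal_projective_compatible (r0 L0 : ℝ) (hr0 : 0 < r0) (hL0 : 0 < L0)
    (hL1 : L0 ≤ 1) (x : Fin 4 → ℝ) (hx : CNSdom x) (p q r s : Fin 4) :
    (∑ t : Fin 4, (Sop (gCNS r0 L0) SCNS x t p * CCNS r0 L0 x q r s t
      + Sop (gCNS r0 L0) SCNS x t q * CCNS r0 L0 x r p s t
      + Sop (gCNS r0 L0) SCNS x t r * CCNS r0 L0 x p q s t) = 0) ∧
    (∑ t : Fin 4, (Sop (gCNS r0 L0) SCNS x t p * PCNS r0 L0 x q r s t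
      + Sop (gCNS r0 L0) SCNS x t q * PCNS r0 L0 x r p s t
      + Sop (gCNS r0 L0) SCNS x t r * PCNS r0 L0 x p q s t) = 0) := by
  obtain ⟨h1, h2, h3, h4⟩ := hx
  have hs1 : Real.sin (x 1) ≠ 0 := (Real.sin_pos_of_pos_of_lt_pi h1 h2).ne'
  have hs2 : Real.sin (x 2) ≠ 0 := (Real.sin_pos_of_pos_of_lt_pi h3 h4).ne'
  have hr : r0 ≠ 0 := hr0.ne'
  have hL : L0 ≠ 0 := hL0.ne'
  constructor <;>
  · fin_cases p <;> fin_cases q <;> fin_cases r <;> fin_cases s <;>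
      (simp (config := { decide := true }) only [sop_eq r0 L0 hr hL x hs1 hs2,
         Fin.sum_univ_four, reduceIte, mul_zero, zero_mul, add_zero, zero_add] <;>
       simp (config := { decide := true }) only [CCNS, PCNS, RCNS, gCNS, SCNS, blk, κCNS,
         reduceIte, mul_zero, zero_mul, add_zero, zero_add, mul_one, one_mul, neg_zero,
         neg_neg, sub_zero, zero_sub, mul_neg, neg_mul] <;>
       (try field_simp) <;> (try ring))
end
end

section
/- For L₀ = 1 (the uncharged Nariai spacetime) the metric is Einstein with S = −(1/r₀²) g, and it satisfies the pseudosymmetric-type condition C·R = (1/(3r₀²)) Q(g,R). -/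
noncomputable section

open Real

/-! ### Auxiliary machinery for the pseudosymmetry computation -/

lemma nar_forall4 (P : Fin 4 → Prop) : (∀ i, P i) ↔ P 0 ∧ P 1 ∧ P 2 ∧ P 3 :=
  ⟨fun h => ⟨h 0, h 1, h 2, h 3⟩, by rintro ⟨a, b, c, d⟩ i; fin_cases i <;> assumption⟩

/-- Table for `g^{αα} C_{uvpα}` of the uncharged Nariai metric. -/
def CmT (s1 s2 : ℝ) : Fin 4 → Fin 4 → Fin 4 → Fin 4 → ℝ :=
  ![![![![0, 0, 0, 0], ![0, 0, 0, 0], ![0, 0, 0, 0], ![0, 0, 0, 0]],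
     ![![0, (2/3*s1^2), 0, 0], ![(2/3), 0, 0, 0], ![0, 0, 0, 0], ![0, 0, 0, 0]],
     ![![0, 0, (-(1/3)*s1^2), 0], ![0, 0, 0, 0], ![(-(1/3)), 0, 0, 0], ![0, 0, 0, 0]],
     ![![0, 0, 0, (-(1/3)*s1^2)], ![0, 0, 0, 0], ![0, 0, 0, 0], ![(-(1/3)*s2^2), 0, 0, 0]]],
   ![![![0, (-(2/3*s1^2)), 0, 0], ![(-(2/3)), 0, 0, 0], ![0, 0, 0, 0], ![0, 0, 0, 0]],
     ![![0, 0, 0, 0], ![0, 0, 0, 0], ![0, 0, 0, 0], ![0, 0, 0, 0]],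
     ![![0, 0, 0, 0], ![0, 0, (1/3), 0], ![0, (-(1/3)), 0, 0], ![0, 0, 0, 0]],
     ![![0, 0, 0, 0], ![0, 0, 0, (1/3)], ![0, 0, 0, 0], ![0, (-(1/3)*s2^2), 0, 0]]],
   ![![![0, 0, (-(-(1/3)*s1^2)), 0], ![0, 0, 0, 0], ![(-(-(1/3))), 0, 0, 0], ![0, 0, 0, 0]],
     ![![0, 0, 0, 0], ![0, 0, (-(1/3)), 0], ![0, (-(-(1/3))), 0, 0], ![0, 0, 0, 0]],
     ![![0, 0, 0, 0], ![0, 0, 0, 0], ![0, 0, 0, 0], ![0, 0, 0, 0]],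
     ![![0, 0, 0, 0], ![0, 0, 0, 0], ![0, 0, 0, (-(2/3))], ![0, 0, (2/3*s2^2), 0]]],
   ![![![0, 0, 0, (-(-(1/3)*s1^2))], ![0, 0, 0, 0], ![0, 0, 0, 0], ![(-(-(1/3)*s2^2)), 0, 0, 0]],
     ![![0, 0, 0, 0], ![0, 0, 0, (-(1/3))], ![0, 0, 0, 0], ![0, (-(-(1/3)*s2^2)), 0, 0]],
     ![![0, 0, 0, 0], ![0, 0, 0, 0], ![0, 0, 0, (-(-(2/3)))], ![0, 0, (-(2/3*s2^2)), 0]],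
     ![![0, 0, 0, 0], ![0, 0, 0, 0], ![0, 0, 0, 0], ![0, 0, 0, 0]]]]

/-- Table for the Riemann tensor. -/
def RtT (r0 s1 s2 : ℝ) : Fin 4 → Fin 4 → Fin 4 → Fin 4 → ℝ :=
  ![![![![0, 0, 0, 0], ![0, 0, 0, 0], ![0, 0, 0, 0], ![0, 0, 0, 0]],
     ![![0, (r0^2*s1^2), 0, 0], ![(-(r0^2*s1^2)), 0, 0, 0], ![0, 0, 0, 0], ![0, 0, 0, 0]],
     ![![0, 0, 0, 0], ![0, 0, 0, 0], ![0, 0, 0, 0], ![0, 0, 0, 0]],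
     ![![0, 0, 0, 0], ![0, 0, 0, 0], ![0, 0, 0, 0], ![0, 0, 0, 0]]],
   ![![![0, (-(r0^2*s1^2)), 0, 0], ![(r0^2*s1^2), 0, 0, 0], ![0, 0, 0, 0], ![0, 0, 0, 0]],
     ![![0, 0, 0, 0], ![0, 0, 0, 0], ![0, 0, 0, 0], ![0, 0, 0, 0]],
     ![![0, 0, 0, 0], ![0, 0, 0, 0], ![0, 0, 0, 0], ![0, 0, 0, 0]],
     ![![0, 0, 0, 0], ![0, 0, 0, 0], ![0, 0, 0, 0], ![0, 0, 0, 0]]],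
   ![![![0, 0, 0, 0], ![0, 0, 0, 0], ![0, 0, 0, 0], ![0, 0, 0, 0]],
     ![![0, 0, 0, 0], ![0, 0, 0, 0], ![0, 0, 0, 0], ![0, 0, 0, 0]],
     ![![0, 0, 0, 0], ![0, 0, 0, 0], ![0, 0, 0, 0], ![0, 0, 0, 0]],
     ![![0, 0, 0, 0], ![0, 0, 0, 0], ![0, 0, 0, (-(r0^2*s2^2))], ![0, 0, (r0^2*s2^2), 0]]],
   ![![![0, 0, 0, 0], ![0, 0, 0, 0], ![0, 0, 0, 0], ![0, 0, 0, 0]],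
     ![![0, 0, 0, 0], ![0, 0, 0, 0], ![0, 0, 0, 0], ![0, 0, 0, 0]],
     ![![0, 0, 0, 0], ![0, 0, 0, 0], ![0, 0, 0, (r0^2*s2^2)], ![0, 0, (-(r0^2*s2^2)), 0]],
     ![![0, 0, 0, 0], ![0, 0, 0, 0], ![0, 0, 0, 0], ![0, 0, 0, 0]]]]

/-- Table for the metric. -/
def gtT (r0 s1 s2 : ℝ) : Fin 4 → Fin 4 → ℝ :=
  ![![-(r0^2*s1^2),0,0,0], ![0,r0^2,0,0], ![0,0,r0^2,0], ![0,0,0,r0^2*s2^2]]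

/-- Table for `g/(3 r₀²)`. -/
def gtT3 (s1 s2 : ℝ) : Fin 4 → Fin 4 → ℝ :=
  ![![-(s1^2/3),0,0,0], ![0,1/3,0,0], ![0,0,1/3,0], ![0,0,0,s2^2/3]]

lemma nar_Rt1 (r0 s1 s2 : ℝ) : ∀ p q r s : Fin 4,
    RtT r0 s1 s2 p q r s = -RtT r0 s1 s2 q p r s := by
  simp only [nar_forall4]
  repeat' apply And.intro
  all_goals (simp only [CmT, RtT, gtT, Matrix.cons_val_zero, Matrix.cons_val_one, Matrix.head_cons, Matrix.cons_val_two, Matrix.tail_cons, Matrix.cons_val_three, Fin.reduceEq, reduceIte, and_self, and_true, true_and, and_false, false_and, if_true, if_false]; all_goals first | rfl | ring1 | norm_num)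

lemma nar_Rt2 (r0 s1 s2 : ℝ) : ∀ p q r s : Fin 4,
    RtT r0 s1 s2 p q r s = -RtT r0 s1 s2 p q s r := by
  simp only [nar_forall4]
  repeat' apply And.intro
  all_goals (simp only [CmT, RtT, gtT, Matrix.cons_val_zero, Matrix.cons_val_one, Matrix.head_cons, Matrix.cons_val_two, Matrix.tail_cons, Matrix.cons_val_three, Fin.reduceEq, reduceIte, and_self, and_true, true_and, and_false, false_and, if_true, if_false]; all_goals first | rfl | ring1 | norm_num)

lemma nar_Cm1 (s1 s2 : ℝ) : ∀ u v p α : Fin 4,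
    CmT s1 s2 u v p α = -CmT s1 s2 v u p α := by
  simp only [nar_forall4]
  repeat' apply And.intro
  all_goals (simp only [CmT, RtT, gtT, Matrix.cons_val_zero, Matrix.cons_val_one, Matrix.head_cons, Matrix.cons_val_two, Matrix.tail_cons, Matrix.cons_val_three, Fin.reduceEq, reduceIte, and_self, and_true, true_and, and_false, false_and, if_true, if_false]; all_goals first | rfl | ring1 | norm_num)

def nar_F (r0 s1 s2 : ℝ) (p q r s u v : Fin 4) : ℝ :=
  -(CmT s1 s2 u v p 0 * RtT r0 s1 s2 0 q r s
    + CmT s1 s2 u v q 0 * RtT r0 s1 s2 p 0 r s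
    + CmT s1 s2 u v r 0 * RtT r0 s1 s2 p q 0 s
    + CmT s1 s2 u v s 0 * RtT r0 s1 s2 p q r 0
    + CmT s1 s2 u v p 1 * RtT r0 s1 s2 1 q r s
    + CmT s1 s2 u v q 1 * RtT r0 s1 s2 p 1 r s
    + CmT s1 s2 u v r 1 * RtT r0 s1 s2 p q 1 s
    + CmT s1 s2 u v s 1 * RtT r0 s1 s2 p q r 1
    + CmT s1 s2 u v p 2 * RtT r0 s1 s2 2 q r s
    + CmT s1 s2 u v q 2 * RtT r0 s1 s2 p 2 r s
    + CmT s1 s2 u v r 2 * RtT r0 s1 s2 p q 2 s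
    + CmT s1 s2 u v s 2 * RtT r0 s1 s2 p q r 2
    + CmT s1 s2 u v p 3 * RtT r0 s1 s2 3 q r s
    + CmT s1 s2 u v q 3 * RtT r0 s1 s2 p 3 r s
    + CmT s1 s2 u v r 3 * RtT r0 s1 s2 p q 3 s
    + CmT s1 s2 u v s 3 * RtT r0 s1 s2 p q r 3)

def nar_G (r0 s1 s2 : ℝ) (p q r s u v : Fin 4) : ℝ :=
  Qop (gtT3 s1 s2) (RtT r0 s1 s2) p q r s u v

lemma nar_Fuv (r0 s1 s2 : ℝ) (p q r s u v : Fin 4) :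
    nar_F r0 s1 s2 p q r s u v = -nar_F r0 s1 s2 p q r s v u := by
  simp only [nar_F]
  linear_combination
    (-(RtT r0 s1 s2 0 q r s)) * nar_Cm1 s1 s2 u v p 0
    + (-(RtT r0 s1 s2 p 0 r s)) * nar_Cm1 s1 s2 u v q 0
    + (-(RtT r0 s1 s2 p q 0 s)) * nar_Cm1 s1 s2 u v r 0
    + (-(RtT r0 s1 s2 p q r 0)) * nar_Cm1 s1 s2 u v s 0
    + (-(RtT r0 s1 s2 1 q r s)) * nar_Cm1 s1 s2 u v p 1
    + (-(RtT r0 s1 s2 p 1 r s)) * nar_Cm1 s1 s2 u v q 1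
    + (-(RtT r0 s1 s2 p q 1 s)) * nar_Cm1 s1 s2 u v r 1
    + (-(RtT r0 s1 s2 p q r 1)) * nar_Cm1 s1 s2 u v s 1
    + (-(RtT r0 s1 s2 2 q r s)) * nar_Cm1 s1 s2 u v p 2
    + (-(RtT r0 s1 s2 p 2 r s)) * nar_Cm1 s1 s2 u v q 2
    + (-(RtT r0 s1 s2 p q 2 s)) * nar_Cm1 s1 s2 u v r 2
    + (-(RtT r0 s1 s2 p q r 2)) * nar_Cm1 s1 s2 u v s 2
    + (-(RtT r0 s1 s2 3 q r s)) * nar_Cm1 s1 s2 u v p 3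
    + (-(RtT r0 s1 s2 p 3 r s)) * nar_Cm1 s1 s2 u v q 3
    + (-(RtT r0 s1 s2 p q 3 s)) * nar_Cm1 s1 s2 u v r 3
    + (-(RtT r0 s1 s2 p q r 3)) * nar_Cm1 s1 s2 u v s 3

lemma nar_Fpq (r0 s1 s2 : ℝ) (p q r s u v : Fin 4) :
    nar_F r0 s1 s2 p q r s u v = -nar_F r0 s1 s2 q p r s u v := by
  simp only [nar_F]
  linear_combination
    (-(CmT s1 s2 u v p 0)) * nar_Rt1 r0 s1 s2 0 q r s
    + (-(CmT s1 s2 u v q 0)) * nar_Rt1 r0 s1 s2 p 0 r s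
    + (-(CmT s1 s2 u v r 0)) * nar_Rt1 r0 s1 s2 p q 0 s
    + (-(CmT s1 s2 u v s 0)) * nar_Rt1 r0 s1 s2 p q r 0
    + (-(CmT s1 s2 u v p 1)) * nar_Rt1 r0 s1 s2 1 q r s
    + (-(CmT s1 s2 u v q 1)) * nar_Rt1 r0 s1 s2 p 1 r s
    + (-(CmT s1 s2 u v r 1)) * nar_Rt1 r0 s1 s2 p q 1 s
    + (-(CmT s1 s2 u v s 1)) * nar_Rt1 r0 s1 s2 p q r 1
    + (-(CmT s1 s2 u v p 2)) * nar_Rt1 r0 s1 s2 2 q r s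
    + (-(CmT s1 s2 u v q 2)) * nar_Rt1 r0 s1 s2 p 2 r s
    + (-(CmT s1 s2 u v r 2)) * nar_Rt1 r0 s1 s2 p q 2 s
    + (-(CmT s1 s2 u v s 2)) * nar_Rt1 r0 s1 s2 p q r 2
    + (-(CmT s1 s2 u v p 3)) * nar_Rt1 r0 s1 s2 3 q r s
    + (-(CmT s1 s2 u v q 3)) * nar_Rt1 r0 s1 s2 p 3 r s
    + (-(CmT s1 s2 u v r 3)) * nar_Rt1 r0 s1 s2 p q 3 s
    + (-(CmT s1 s2 u v s 3)) * nar_Rt1 r0 s1 s2 p q r 3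

lemma nar_Frs (r0 s1 s2 : ℝ) (p q r s u v : Fin 4) :
    nar_F r0 s1 s2 p q r s u v = -nar_F r0 s1 s2 p q s r u v := by
  simp only [nar_F]
  linear_combination
    (-(CmT s1 s2 u v p 0)) * nar_Rt2 r0 s1 s2 0 q r s
    + (-(CmT s1 s2 u v q 0)) * nar_Rt2 r0 s1 s2 p 0 r s
    + (-(CmT s1 s2 u v r 0)) * nar_Rt2 r0 s1 s2 p q 0 s
    + (-(CmT s1 s2 u v s 0)) * nar_Rt2 r0 s1 s2 p q r 0
    + (-(CmT s1 s2 u v p 1)) * nar_Rt2 r0 s1 s2 1 q r s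
    + (-(CmT s1 s2 u v q 1)) * nar_Rt2 r0 s1 s2 p 1 r s
    + (-(CmT s1 s2 u v r 1)) * nar_Rt2 r0 s1 s2 p q 1 s
    + (-(CmT s1 s2 u v s 1)) * nar_Rt2 r0 s1 s2 p q r 1
    + (-(CmT s1 s2 u v p 2)) * nar_Rt2 r0 s1 s2 2 q r s
    + (-(CmT s1 s2 u v q 2)) * nar_Rt2 r0 s1 s2 p 2 r s
    + (-(CmT s1 s2 u v r 2)) * nar_Rt2 r0 s1 s2 p q 2 s
    + (-(CmT s1 s2 u v s 2)) * nar_Rt2 r0 s1 s2 p q r 2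
    + (-(CmT s1 s2 u v p 3)) * nar_Rt2 r0 s1 s2 3 q r s
    + (-(CmT s1 s2 u v q 3)) * nar_Rt2 r0 s1 s2 p 3 r s
    + (-(CmT s1 s2 u v r 3)) * nar_Rt2 r0 s1 s2 p q 3 s
    + (-(CmT s1 s2 u v s 3)) * nar_Rt2 r0 s1 s2 p q r 3

lemma nar_Guv (r0 s1 s2 : ℝ) (p q r s u v : Fin 4) :
    nar_G r0 s1 s2 p q r s u v = -nar_G r0 s1 s2 p q r s v u := by
  simp only [nar_G, Qop]; ring

lemma nar_Gpq (r0 s1 s2 : ℝ) (p q r s u v : Fin 4) :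
    nar_G r0 s1 s2 p q r s u v = -nar_G r0 s1 s2 q p r s u v := by
  simp only [nar_G, Qop]
  linear_combination
    gtT3 s1 s2 v p * nar_Rt1 r0 s1 s2 u q r s
    + gtT3 s1 s2 v q * nar_Rt1 r0 s1 s2 p u r s
    + gtT3 s1 s2 v r * nar_Rt1 r0 s1 s2 p q u s
    + gtT3 s1 s2 v s * nar_Rt1 r0 s1 s2 p q r u
    - gtT3 s1 s2 u p * nar_Rt1 r0 s1 s2 v q r s
    - gtT3 s1 s2 u q * nar_Rt1 r0 s1 s2 p v r s
    - gtT3 s1 s2 u r * nar_Rt1 r0 s1 s2 p q v s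
    - gtT3 s1 s2 u s * nar_Rt1 r0 s1 s2 p q r v

lemma nar_Grs (r0 s1 s2 : ℝ) (p q r s u v : Fin 4) :
    nar_G r0 s1 s2 p q r s u v = -nar_G r0 s1 s2 p q s r u v := by
  simp only [nar_G, Qop]
  linear_combination
    gtT3 s1 s2 v p * nar_Rt2 r0 s1 s2 u q r s
    + gtT3 s1 s2 v q * nar_Rt2 r0 s1 s2 p u r s
    + gtT3 s1 s2 v r * nar_Rt2 r0 s1 s2 p q u s
    + gtT3 s1 s2 v s * nar_Rt2 r0 s1 s2 p q r u
    - gtT3 s1 s2 u p * nar_Rt2 r0 s1 s2 v q r s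
    - gtT3 s1 s2 u q * nar_Rt2 r0 s1 s2 p v r s
    - gtT3 s1 s2 u r * nar_Rt2 r0 s1 s2 p q v s
    - gtT3 s1 s2 u s * nar_Rt2 r0 s1 s2 p q r v

lemma nar_Fd1 (r0 s1 s2 : ℝ) (p r s u v : Fin 4) :
    nar_F r0 s1 s2 p p r s u v = 0 := by
  have h := nar_Fpq r0 s1 s2 p p r s u v
  linarith

lemma nar_Fd2 (r0 s1 s2 : ℝ) (p q r u v : Fin 4) :
    nar_F r0 s1 s2 p q r r u v = 0 := by
  have h := nar_Frs r0 s1 s2 p q r r u v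
  linarith

lemma nar_Fd3 (r0 s1 s2 : ℝ) (p q r s u : Fin 4) :
    nar_F r0 s1 s2 p q r s u u = 0 := by
  have h := nar_Fuv r0 s1 s2 p q r s u u
  linarith

lemma nar_Gd1 (r0 s1 s2 : ℝ) (p r s u v : Fin 4) :
    nar_G r0 s1 s2 p p r s u v = 0 := by
  have h := nar_Gpq r0 s1 s2 p p r s u v
  linarith

lemma nar_Gd2 (r0 s1 s2 : ℝ) (p q r u v : Fin 4) :
    nar_G r0 s1 s2 p q r r u v = 0 := by
  have h := nar_Grs r0 s1 s2 p q r r u v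
  linarith

lemma nar_Gd3 (r0 s1 s2 : ℝ) (p q r s u : Fin 4) :
    nar_G r0 s1 s2 p q r s u u = 0 := by
  have h := nar_Guv r0 s1 s2 p q r s u u
  linarith

set_option maxHeartbeats 3200000 in
lemma nar_A (r0 s1 s2 : ℝ) : ∀ p q r s u v : Fin 4, p < q → r < s → u < v →
    nar_F r0 s1 s2 p q r s u v = nar_G r0 s1 s2 p q r s u v := by
  simp only [nar_forall4]
  repeat' apply And.intro
  all_goals intro h1 h2 h3
  all_goals first
    | exact absurd h1 (by decide)
    | exact absurd h2 (by decide)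
    | exact absurd h3 (by decide)
    | (simp only [nar_F, nar_G, Qop, CmT, RtT, gtT, gtT3, Matrix.cons_val_zero, Matrix.cons_val_one, Matrix.head_cons, Matrix.cons_val_two, Matrix.tail_cons, Matrix.cons_val_three, Fin.reduceEq, reduceIte, and_self, and_true, true_and, and_false, false_and, if_true, if_false]
       all_goals first | rfl | ring1 | norm_num)

lemma nar_B (r0 s1 s2 : ℝ) : ∀ p q r s u v : Fin 4, p < q → r < s →
    nar_F r0 s1 s2 p q r s u v = nar_G r0 s1 s2 p q r s u v := by
  intro p q r s u v h1 h2
  rcases lt_trichotomy u v with h | h | h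
  · exact nar_A r0 s1 s2 p q r s u v h1 h2 h
  · subst h; rw [nar_Fd3, nar_Gd3]
  · rw [nar_Fuv r0 s1 s2 p q r s u v, nar_Guv r0 s1 s2 p q r s u v]
    exact congrArg Neg.neg (nar_A r0 s1 s2 p q r s v u h1 h2 h)

lemma nar_C (r0 s1 s2 : ℝ) : ∀ p q r s u v : Fin 4, p < q →
    nar_F r0 s1 s2 p q r s u v = nar_G r0 s1 s2 p q r s u v := by
  intro p q r s u v h1
  rcases lt_trichotomy r s with h | h | h
  · exact nar_B r0 s1 s2 p q r s u v h1 h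
  · subst h; rw [nar_Fd2, nar_Gd2]
  · rw [nar_Frs r0 s1 s2 p q r s u v, nar_Grs r0 s1 s2 p q r s u v]
    exact congrArg Neg.neg (nar_B r0 s1 s2 p q s r u v h1 h)

lemma nar_FG (r0 s1 s2 : ℝ) (p q r s u v : Fin 4) :
    nar_F r0 s1 s2 p q r s u v = nar_G r0 s1 s2 p q r s u v := by
  rcases lt_trichotomy p q with h | h | h
  · exact nar_C r0 s1 s2 p q r s u v h
  · subst h; rw [nar_Fd1, nar_Gd1]
  · rw [nar_Fpq r0 s1 s2 p q r s u v, nar_Gpq r0 s1 s2 p q r s u v]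
    exact congrArg Neg.neg (nar_C r0 s1 s2 q p r s u v h)

lemma nar_hg (r0 s1 s2 : ℝ) (x : Fin 4 → ℝ)
    (h1 : Real.sin (x 1) = s1) (h2 : Real.sin (x 2) = s2) :
    ∀ p q : Fin 4, gCNS r0 1 x p q = gtT r0 s1 s2 p q := by
  simp only [nar_forall4]
  repeat' apply And.intro
  all_goals (simp only [gCNS, h1, h2, CmT, RtT, gtT, Matrix.cons_val_zero, Matrix.cons_val_one, Matrix.head_cons, Matrix.cons_val_two, Matrix.tail_cons, Matrix.cons_val_three, Fin.reduceEq, reduceIte, and_self, and_true, true_and, and_false, false_and, if_true, if_false]; all_goals first | rfl | ring1 | norm_num)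

set_option maxHeartbeats 1600000 in
lemma nar_hR (r0 s1 s2 : ℝ) (x : Fin 4 → ℝ)
    (h1 : Real.sin (x 1) = s1) (h2 : Real.sin (x 2) = s2) :
    ∀ p q r s : Fin 4, RCNS r0 1 x p q r s = RtT r0 s1 s2 p q r s := by
  simp only [nar_forall4]
  repeat' apply And.intro
  all_goals (simp only [RCNS, blk, h1, h2, CmT, RtT, gtT, Matrix.cons_val_zero, Matrix.cons_val_one, Matrix.head_cons, Matrix.cons_val_two, Matrix.tail_cons, Matrix.cons_val_three, Fin.reduceEq, reduceIte, and_self, and_true, true_and, and_false, false_and, if_true, if_false]; all_goals first | rfl | ring1 | norm_num)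

set_option maxHeartbeats 1600000 in
lemma nar_hC0 (r0 s1 s2 : ℝ) (hr0 : r0 ≠ 0) (x : Fin 4 → ℝ)
    (h1 : Real.sin (x 1) = s1) (h2 : Real.sin (x 2) = s2) :
    ∀ u v p : Fin 4, CCNS r0 1 x u v p 0 = (-(r0^2*s1^2)) * CmT s1 s2 u v p 0 := by
  simp only [nar_forall4]
  repeat' apply And.intro
  all_goals (simp only [gCNS, RCNS, SCNS, CCNS, κCNS, blk, h1, h2, CmT, RtT, gtT, Matrix.cons_val_zero, Matrix.cons_val_one, Matrix.head_cons, Matrix.cons_val_two, Matrix.tail_cons, Matrix.cons_val_three, Fin.reduceEq, reduceIte, and_self, and_true, true_and, and_false, false_and, if_true, if_false]; all_goals first | rfl | ring1 | (field_simp; try ring1) | norm_num)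

set_option maxHeartbeats 1600000 in
lemma nar_hC1 (r0 s1 s2 : ℝ) (hr0 : r0 ≠ 0) (x : Fin 4 → ℝ)
    (h1 : Real.sin (x 1) = s1) (h2 : Real.sin (x 2) = s2) :
    ∀ u v p : Fin 4, CCNS r0 1 x u v p 1 = (r0^2) * CmT s1 s2 u v p 1 := by
  simp only [nar_forall4]
  repeat' apply And.intro
  all_goals (simp only [gCNS, RCNS, SCNS, CCNS, κCNS, blk, h1, h2, CmT, RtT, gtT, Matrix.cons_val_zero, Matrix.cons_val_one, Matrix.head_cons, Matrix.cons_val_two, Matrix.tail_cons, Matrix.cons_val_three, Fin.reduceEq, reduceIte, and_self, and_true, true_and, and_false, false_and, if_true, if_false]; all_goals first | rfl | ring1 | (field_simp; try ring1) | norm_num)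

set_option maxHeartbeats 1600000 in
lemma nar_hC2 (r0 s1 s2 : ℝ) (hr0 : r0 ≠ 0) (x : Fin 4 → ℝ)
    (h1 : Real.sin (x 1) = s1) (h2 : Real.sin (x 2) = s2) :
    ∀ u v p : Fin 4, CCNS r0 1 x u v p 2 = (r0^2) * CmT s1 s2 u v p 2 := by
  simp only [nar_forall4]
  repeat' apply And.intro
  all_goals (simp only [gCNS, RCNS, SCNS, CCNS, κCNS, blk, h1, h2, CmT, RtT, gtT, Matrix.cons_val_zero, Matrix.cons_val_one, Matrix.head_cons, Matrix.cons_val_two, Matrix.tail_cons, Matrix.cons_val_three, Fin.reduceEq, reduceIte, and_self, and_true, true_and, and_false, false_and, if_true, if_false]; all_goals first | rfl | ring1 | (field_simp; try ring1) | norm_num)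

set_option maxHeartbeats 1600000 in
lemma nar_hC3 (r0 s1 s2 : ℝ) (hr0 : r0 ≠ 0) (x : Fin 4 → ℝ)
    (h1 : Real.sin (x 1) = s1) (h2 : Real.sin (x 2) = s2) :
    ∀ u v p : Fin 4, CCNS r0 1 x u v p 3 = (r0^2*s2^2) * CmT s1 s2 u v p 3 := by
  simp only [nar_forall4]
  repeat' apply And.intro
  all_goals (simp only [gCNS, RCNS, SCNS, CCNS, κCNS, blk, h1, h2, CmT, RtT, gtT, Matrix.cons_val_zero, Matrix.cons_val_one, Matrix.head_cons, Matrix.cons_val_two, Matrix.tail_cons, Matrix.cons_val_three, Fin.reduceEq, reduceIte, and_self, and_true, true_and, and_false, false_and, if_true, if_false]; all_goals first | rfl | ring1 | (field_simp; try ring1) | norm_num)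

lemma nar_hg3 (r0 s1 s2 : ℝ) (hr0 : r0 ≠ 0) (x : Fin 4 → ℝ)
    (h1 : Real.sin (x 1) = s1) (h2 : Real.sin (x 2) = s2) :
    ∀ p q : Fin 4, (1/(3*r0^2)) * gCNS r0 1 x p q = gtT3 s1 s2 p q := by
  simp only [nar_forall4]
  repeat' apply And.intro
  all_goals (simp only [gCNS, h1, h2, gtT3, Matrix.cons_val_zero, Matrix.cons_val_one,
    Matrix.head_cons, Matrix.cons_val_two, Matrix.tail_cons, Matrix.cons_val_three,
    Fin.reduceEq, reduceIte, and_self, and_true, true_and, and_false, false_and, if_true, if_false]; all_goals first | rfl | ring1 | (field_simp; try ring1) | norm_num)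

lemma nar_hQ (r0 s1 s2 : ℝ) (hr0 : r0 ≠ 0) (x : Fin 4 → ℝ)
    (h1 : Real.sin (x 1) = s1) (h2 : Real.sin (x 2) = s2) :
    ∀ p q r s u v : Fin 4, (1 / (3 * r0 ^ 2)) * Qop (gCNS r0 1 x) (RCNS r0 1 x) p q r s u v
      = nar_G r0 s1 s2 p q r s u v := by
  have hg3 := nar_hg3 r0 s1 s2 hr0 x h1 h2
  have hR := nar_hR r0 s1 s2 x h1 h2
  intro p q r s u v
  simp only [Qop, nar_G]
  linear_combination
    ((1/(3*r0^2)) * gCNS r0 1 x v p) * hR u q r s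
    + (RtT r0 s1 s2 u q r s) * hg3 v p
    + ((1/(3*r0^2)) * gCNS r0 1 x v q) * hR p u r s
    + (RtT r0 s1 s2 p u r s) * hg3 v q
    + ((1/(3*r0^2)) * gCNS r0 1 x v r) * hR p q u s
    + (RtT r0 s1 s2 p q u s) * hg3 v r
    + ((1/(3*r0^2)) * gCNS r0 1 x v s) * hR p q r u
    + (RtT r0 s1 s2 p q r u) * hg3 v s
    - ((1/(3*r0^2)) * gCNS r0 1 x u p) * hR v q r s
    - (RtT r0 s1 s2 v q r s) * hg3 u p
    - ((1/(3*r0^2)) * gCNS r0 1 x u q) * hR p v r s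
    - (RtT r0 s1 s2 p v r s) * hg3 u q
    - ((1/(3*r0^2)) * gCNS r0 1 x u r) * hR p q v s
    - (RtT r0 s1 s2 p q v s) * hg3 u r
    - ((1/(3*r0^2)) * gCNS r0 1 x u s) * hR p q r v
    - (RtT r0 s1 s2 p q r v) * hg3 u s

lemma nar_key (r0 s1 s2 : ℝ) (hr0 : r0 ≠ 0) (hs1 : s1 ≠ 0) (hs2 : s2 ≠ 0)
    (x : Fin 4 → ℝ) (h1 : Real.sin (x 1) = s1) (h2 : Real.sin (x 2) = s2) :
    ∀ p q r s u v : Fin 4, dot4 (gCNS r0 1) (CCNS r0 1) (RCNS r0 1) x p q r s u v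
      = nar_F r0 s1 s2 p q r s u v := by
  have hg := nar_hg r0 s1 s2 x h1 h2
  have hR := nar_hR r0 s1 s2 x h1 h2
  have hC0 := nar_hC0 r0 s1 s2 hr0 x h1 h2
  have hC1 := nar_hC1 r0 s1 s2 hr0 x h1 h2
  have hC2 := nar_hC2 r0 s1 s2 hr0 x h1 h2
  have hC3 := nar_hC3 r0 s1 s2 hr0 x h1 h2
  have i0 : (-(r0^2*s1^2))⁻¹ * (-(r0^2*s1^2)) = 1 := by field_simp
  have i1 : (r0^2 : ℝ)⁻¹ * (r0^2) = 1 := by field_simp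
  have i2 : (r0^2 : ℝ)⁻¹ * (r0^2) = 1 := i1
  have i3 : (r0^2*s2^2)⁻¹ * (r0^2*s2^2) = 1 := by field_simp
  intro p q r s u v
  simp only [dot4, Fin.sum_univ_four, ginv, hg, hR, nar_F, gtT, Matrix.cons_val_zero, Matrix.cons_val_one, Matrix.head_cons, Matrix.cons_val_two, Matrix.tail_cons, Matrix.cons_val_three, Fin.reduceEq, reduceIte]
  linear_combination
    (-(RtT r0 s1 s2 0 q r s) * (-(r0^2*s1^2))⁻¹) * hC0 u v p
    + (-(RtT r0 s1 s2 0 q r s) * CmT s1 s2 u v p 0) * i0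
    + (-(RtT r0 s1 s2 p 0 r s) * (-(r0^2*s1^2))⁻¹) * hC0 u v q
    + (-(RtT r0 s1 s2 p 0 r s) * CmT s1 s2 u v q 0) * i0
    + (-(RtT r0 s1 s2 p q 0 s) * (-(r0^2*s1^2))⁻¹) * hC0 u v r
    + (-(RtT r0 s1 s2 p q 0 s) * CmT s1 s2 u v r 0) * i0
    + (-(RtT r0 s1 s2 p q r 0) * (-(r0^2*s1^2))⁻¹) * hC0 u v s
    + (-(RtT r0 s1 s2 p q r 0) * CmT s1 s2 u v s 0) * i0
    + (-(RtT r0 s1 s2 1 q r s) * (r0^2)⁻¹) * hC1 u v p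
    + (-(RtT r0 s1 s2 1 q r s) * CmT s1 s2 u v p 1) * i1
    + (-(RtT r0 s1 s2 p 1 r s) * (r0^2)⁻¹) * hC1 u v q
    + (-(RtT r0 s1 s2 p 1 r s) * CmT s1 s2 u v q 1) * i1
    + (-(RtT r0 s1 s2 p q 1 s) * (r0^2)⁻¹) * hC1 u v r
    + (-(RtT r0 s1 s2 p q 1 s) * CmT s1 s2 u v r 1) * i1
    + (-(RtT r0 s1 s2 p q r 1) * (r0^2)⁻¹) * hC1 u v s
    + (-(RtT r0 s1 s2 p q r 1) * CmT s1 s2 u v s 1) * i1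
    + (-(RtT r0 s1 s2 2 q r s) * (r0^2)⁻¹) * hC2 u v p
    + (-(RtT r0 s1 s2 2 q r s) * CmT s1 s2 u v p 2) * i2
    + (-(RtT r0 s1 s2 p 2 r s) * (r0^2)⁻¹) * hC2 u v q
    + (-(RtT r0 s1 s2 p 2 r s) * CmT s1 s2 u v q 2) * i2
    + (-(RtT r0 s1 s2 p q 2 s) * (r0^2)⁻¹) * hC2 u v r
    + (-(RtT r0 s1 s2 p q 2 s) * CmT s1 s2 u v r 2) * i2
    + (-(RtT r0 s1 s2 p q r 2) * (r0^2)⁻¹) * hC2 u v s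
    + (-(RtT r0 s1 s2 p q r 2) * CmT s1 s2 u v s 2) * i2
    + (-(RtT r0 s1 s2 3 q r s) * (r0^2*s2^2)⁻¹) * hC3 u v p
    + (-(RtT r0 s1 s2 3 q r s) * CmT s1 s2 u v p 3) * i3
    + (-(RtT r0 s1 s2 p 3 r s) * (r0^2*s2^2)⁻¹) * hC3 u v q
    + (-(RtT r0 s1 s2 p 3 r s) * CmT s1 s2 u v q 3) * i3
    + (-(RtT r0 s1 s2 p q 3 s) * (r0^2*s2^2)⁻¹) * hC3 u v r
    + (-(RtT r0 s1 s2 p q 3 s) * CmT s1 s2 u v r 3) * i3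
    + (-(RtT r0 s1 s2 p q r 3) * (r0^2*s2^2)⁻¹) * hC3 u v s
    + (-(RtT r0 s1 s2 p q r 3) * CmT s1 s2 u v s 3) * i3

/-- For `L₀ = 1` (the uncharged Nariai spacetime) the metric is Einstein
with `S = -(1/r₀²) g`, and it satisfies `C·R = (1/(3r₀²)) Q(g,R)`. -/
theorem nariai_einstein_and_pseudosymmetric (r0 : ℝ) (hr0 : 0 < r0)
    (x : Fin 4 → ℝ) (hx : CNSdom x) :
    (∀ p q : Fin 4, SCNS x p q = -(1 / r0 ^ 2) * gCNS r0 1 x p q) ∧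
    (∀ p q r s u v : Fin 4,
      dot4 (gCNS r0 1) (CCNS r0 1) (RCNS r0 1) x p q r s u v
        = (1 / (3 * r0 ^ 2)) * Qop (gCNS r0 1 x) (RCNS r0 1 x) p q r s u v) := by
  obtain ⟨ha, hb, hc, hd⟩ := hx
  have hr0' : r0 ≠ 0 := ne_of_gt hr0
  have hs1 : Real.sin (x 1) ≠ 0 := ne_of_gt (Real.sin_pos_of_pos_of_lt_pi ha hb)
  have hs2 : Real.sin (x 2) ≠ 0 := ne_of_gt (Real.sin_pos_of_pos_of_lt_pi hc hd)
  refine ⟨?_, ?_⟩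
  · intro p q
    fin_cases p <;> fin_cases q <;> simp [SCNS, gCNS] <;> field_simp
  · have key := nar_key r0 (Real.sin (x 1)) (Real.sin (x 2)) hr0' hs1 hs2 x rfl rfl
    have hQ := nar_hQ r0 (Real.sin (x 1)) (Real.sin (x 2)) hr0' x rfl rfl
    intro p q r s u v
    rw [key p q r s u v, hQ p q r s u v]
    exact nar_FG r0 (Real.sin (x 1)) (Real.sin (x 2)) p q r s u v
end
end
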